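/- Let φ and ψ be unit vectors in a complex Hilbert space H, and let P_φ = |φ⟩⟨φ| and P_ψ = |ψ⟩⟨ψ| be the corresponding rank-one orthogonal projections. Then the operator norm satisfies ‖P_φ − P_ψ‖ = √(1 − |⟨φ,ψ⟩|²). -/

import Mathlib

open scoped InnerProductSpace
open Metric

/-- The rank-one operator `χ ↦ ⟪φ, χ⟫ • φ` (orthogonal projection onto `ℂ φ` when `‖φ‖ = 1`). -/
noncomputable def proj (H : Type) [NormedAddCommGroup H] [InnerProductSpace ℂ H] (φ : H) :
    H →L[ℂ] H := (innerSL ℂ φ).smulRight φ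

/-- Equivalence of unit vectors up to a phase factor. -/
def phaseSetoid (H : Type) [NormedAddCommGroup H] [InnerProductSpace ℂ H] :
    Setoid (sphere (0 : H) 1) where
  r φ ψ := ∃ c : ℂ, ‖c‖ = 1 ∧ (φ : H) = c • (ψ : H)
  iseqv := by
    constructor
    · intro φ; exact ⟨1, by simp⟩
    · rintro φ ψ ⟨c, hc, h⟩
      have hc0 : c ≠ 0 := by intro h0; simp [h0] at hc
      exact ⟨c⁻¹, by simp [hc], by rw [h, smul_smul, inv_mul_cancel₀ hc0, one_smul]⟩
    · rintro φ ψ ξ ⟨c, hc, h⟩ ⟨d, hd, h'⟩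
      exact ⟨c * d, by simp [hc, hd], by rw [h, h', smul_smul]⟩

/-
Write `a = ⟪φ, ψ⟫` and, for a vector `w`, `w⊥ = w - ⟪φ, w⟫ • φ` for its component orthogonal to `φ`.
Expanding the square gives, for every `χ`,
  `‖(P_φ - P_ψ) χ‖² = (1 - |a|²) |⟪φ, χ⟫|² + |⟪ψ⊥, χ⊥⟫|²`,
and since `‖ψ⊥‖² = 1 - |a|²` and `‖χ⊥‖² = ‖χ‖² - |⟪φ, χ⟫|²`, Cauchy–Schwarz bounds this by
`(1 - |a|²) ‖χ‖²`. The bound is attained at `χ = φ`, where `(P_φ - P_ψ) φ = φ - ⟪ψ, φ⟫ • ψ`.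
-/

open scoped ComplexConjugate

lemma Complex.sq_norm_sub_two_re_add_sq_norm_eq (x y a : ℂ) :
    ‖x‖ ^ 2 - 2 * (conj x * (y * a)).re + ‖y‖ ^ 2
      = (1 - ‖a‖ ^ 2) * ‖x‖ ^ 2 + ‖y - conj a * x‖ ^ 2 := by
  simp only [Complex.sq_norm, Complex.normSq_apply, Complex.mul_re, Complex.mul_im,
    Complex.sub_re, Complex.sub_im, Complex.conj_re, Complex.conj_im]
  ring

section UnitVector

variable {E : Type*} [NormedAddCommGroup E] [InnerProductSpace ℂ E] {φ : E}

lemma inner_sub_inner_smul_self_left (hφ : ‖φ‖ = 1) (w : E) :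
    ⟪w - ⟪φ, w⟫_ℂ • φ, φ⟫_ℂ = 0 := by
  rw [inner_sub_left, inner_smul_left, inner_self_eq_one_of_norm_eq_one hφ, inner_conj_symm,
    mul_one, sub_self]

lemma sq_norm_sub_inner_smul (hφ : ‖φ‖ = 1) (χ : E) :
    ‖χ - ⟪φ, χ⟫_ℂ • φ‖ ^ 2 = ‖χ‖ ^ 2 - ‖⟪φ, χ⟫_ℂ‖ ^ 2 := by
  rw [@norm_sub_sq ℂ, inner_smul_right, ← inner_conj_symm χ φ, norm_smul, hφ,
    RCLike.re_to_complex, Complex.mul_conj', ← Complex.ofReal_pow, Complex.ofReal_re]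
  ring

lemma sq_norm_inner_sub_inner_smul_le (hφ : ‖φ‖ = 1) (w χ : E) :
    ‖⟪w - ⟪φ, w⟫_ℂ • φ, χ⟫_ℂ‖ ^ 2
      ≤ (‖w‖ ^ 2 - ‖⟪φ, w⟫_ℂ‖ ^ 2) * (‖χ‖ ^ 2 - ‖⟪φ, χ⟫_ℂ‖ ^ 2) := by
  have h_perp : ⟪w - ⟪φ, w⟫_ℂ • φ, χ⟫_ℂ = ⟪w - ⟪φ, w⟫_ℂ • φ, χ - ⟪φ, χ⟫_ℂ • φ⟫_ℂ := by
    rw [inner_sub_right, inner_smul_right, inner_sub_inner_smul_self_left hφ, mul_zero, sub_zero]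
  rw [h_perp, ← sq_norm_sub_inner_smul hφ, ← sq_norm_sub_inner_smul hφ, ← mul_pow]
  exact pow_le_pow_left₀ (norm_nonneg _) (norm_inner_le_norm _ _) 2

variable {ψ : E}

lemma sq_norm_sub_inner_smul_of_norm_eq_one (hφ : ‖φ‖ = 1) (hψ : ‖ψ‖ = 1) :
    ‖ψ - ⟪φ, ψ⟫_ℂ • φ‖ ^ 2 = 1 - ‖⟪φ, ψ⟫_ℂ‖ ^ 2 := by
  rw [sq_norm_sub_inner_smul hφ, hψ, one_pow]

lemma sq_norm_inner_smul_sub_inner_smul (hφ : ‖φ‖ = 1) (hψ : ‖ψ‖ = 1) (χ : E) :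
    ‖⟪φ, χ⟫_ℂ • φ - ⟪ψ, χ⟫_ℂ • ψ‖ ^ 2
      = (1 - ‖⟪φ, ψ⟫_ℂ‖ ^ 2) * ‖⟪φ, χ⟫_ℂ‖ ^ 2 + ‖⟪ψ - ⟪φ, ψ⟫_ℂ • φ, χ⟫_ℂ‖ ^ 2 := by
  rw [@norm_sub_sq ℂ, inner_smul_left, inner_smul_right, norm_smul, norm_smul, hφ, hψ,
    mul_one, mul_one, inner_sub_left, inner_smul_left, RCLike.re_to_complex]
  exact Complex.sq_norm_sub_two_re_add_sq_norm_eq _ _ _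

lemma sq_norm_inner_smul_sub_inner_smul_le (hφ : ‖φ‖ = 1) (hψ : ‖ψ‖ = 1) (χ : E) :
    ‖⟪φ, χ⟫_ℂ • φ - ⟪ψ, χ⟫_ℂ • ψ‖ ^ 2 ≤ (1 - ‖⟪φ, ψ⟫_ℂ‖ ^ 2) * ‖χ‖ ^ 2 := by
  have h_cs := sq_norm_inner_sub_inner_smul_le hφ ψ χ
  rw [hψ, one_pow] at h_cs
  rw [sq_norm_inner_smul_sub_inner_smul hφ hψ]
  linarith

end UnitVector

lemma proj_apply {H : Type} [NormedAddCommGroup H] [InnerProductSpace ℂ H] (φ χ : H) :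
    proj H φ χ = ⟪φ, χ⟫_ℂ • φ :=
  rfl

theorem stmt3_general (H : Type) [NormedAddCommGroup H] [InnerProductSpace ℂ H]
    (φ ψ : H) (hφ : ‖φ‖ = 1) (hψ : ‖ψ‖ = 1) :
    ‖proj H φ - proj H ψ‖ = Real.sqrt (1 - ‖⟪φ, ψ⟫_ℂ‖ ^ 2) := by
  have h_nonneg : 0 ≤ 1 - ‖⟪φ, ψ⟫_ℂ‖ ^ 2 :=
    sq_norm_sub_inner_smul_of_norm_eq_one hφ hψ ▸ sq_nonneg _
  apply le_antisymm
  · refine ContinuousLinearMap.opNorm_le_bound _ (Real.sqrt_nonneg _) fun χ ↦ ?_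
    rw [← Real.sqrt_sq (norm_nonneg χ), ← Real.sqrt_mul h_nonneg, Real.le_sqrt (norm_nonneg _)
      (by positivity), sub_apply, proj_apply, proj_apply]
    exact sq_norm_inner_smul_sub_inner_smul_le hφ hψ χ
  · have h_apply_φ : (proj H φ - proj H ψ) φ = φ - ⟪ψ, φ⟫_ℂ • ψ := by
      rw [sub_apply, proj_apply, proj_apply, inner_self_eq_one_of_norm_eq_one hφ, one_smul]
    calc Real.sqrt (1 - ‖⟪φ, ψ⟫_ℂ‖ ^ 2) = ‖φ - ⟪ψ, φ⟫_ℂ • ψ‖ := by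
          rw [norm_inner_symm, ← sq_norm_sub_inner_smul_of_norm_eq_one hψ hφ,
            Real.sqrt_sq (norm_nonneg _)]
      _ ≤ ‖proj H φ - proj H ψ‖ := h_apply_φ ▸ (proj H φ - proj H ψ).unit_le_opNorm φ hφ.le

/-- For unit vectors `φ, ψ`, the operator norm of the difference of the
rank-one projections is `‖P_φ − P_ψ‖ = √(1 − |⟪φ,ψ⟫|²)`. -/
theorem stmt3 (H : Type) [NormedAddCommGroup H] [InnerProductSpace ℂ H] [CompleteSpace H]
    (φ ψ : H) (hφ : ‖φ‖ = 1) (hψ : ‖ψ‖ = 1) :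
    ‖proj H φ - proj H ψ‖ = Real.sqrt (1 - ‖⟪φ, ψ⟫_ℂ‖ ^ 2) :=
  stmt3_general H φ ψ hφ hψ
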